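/- Let G be a simple graph on a finite vertex type V with positions p : V → EuclideanSpace ℝ (Fin 3). Let V' = Option V be V extended by one new vertex ⋆ = none with position q ∈ EuclideanSpace ℝ (Fin 3) (so p' : V' → ℝ³ extends p by p'(⋆) = q), and let G' be a simple graph on V' whose restriction to V equals G and in which ⋆ is adjacent to three vertices u₁, u₂, u₃ ∈ V. If the three vectors q − p u₁, q − p u₂, q − p u₃ are linearly independent, then Module.finrank ℝ Harm(G', p') ≤ Module.finrank ℝ Harm(G, p); equivalently, attaching a new vertex by a nondegenerate tetrahedral link increases the rank of the coboundary matrix by at least 3, so the nullity of the sheaf Laplacian does not increase. -/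
import Mathlib


open scoped RealInnerProductSpace

/-- The harmonic space (global section space of the anisotropic sheaf / kernel of the
ANM Hessian) of a simple graph `G` with positions `p`. -/
def Harm {V : Type*} (G : SimpleGraph V) (p : V → EuclideanSpace ℝ (Fin 3)) :
    Submodule ℝ (V → EuclideanSpace ℝ (Fin 3)) where
  carrier := {x | ∀ ⦃i j : V⦄, G.Adj i j → ⟪p j - p i, x j - x i⟫ = 0}
  add_mem' := by
    intro x y hx hy i j hij
    have h : (x + y) j - (x + y) i = (x j - x i) + (y j - y i) := by
      simp only [Pi.add_apply]; abel
    rw [h, inner_add_right, hx hij, hy hij, add_zero]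
  zero_mem' := by
    intro i j hij
    simp
  smul_mem' := by
    intro c x hx i j hij
    have h : (c • x) j - (c • x) i = c • (x j - x i) := by
      simp only [Pi.smul_apply, smul_sub]
    rw [h, inner_smul_right, hx hij, mul_zero]

/-- Attaching a new vertex (with position `q`) to a graph by edges to three vertices whose
difference vectors `q − p uₖ` are linearly independent does not increase the dimension of
the harmonic space (the nullity of the sheaf Laplacian). -/
theorem finrank_harm_extend_le {V : Type*} [Fintype V]
    (G : SimpleGraph V) (p : V → EuclideanSpace ℝ (Fin 3))
    (q : EuclideanSpace ℝ (Fin 3)) (G' : SimpleGraph (Option V))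
    (hrestr : ∀ u v : V, G'.Adj (some u) (some v) ↔ G.Adj u v)
    (u₁ u₂ u₃ : V)
    (h1 : G'.Adj none (some u₁)) (h2 : G'.Adj none (some u₂)) (h3 : G'.Adj none (some u₃))
    (hind : LinearIndependent ℝ ![q - p u₁, q - p u₂, q - p u₃]) :
    Module.finrank ℝ (Harm G' (fun o => o.elim q p)) ≤ Module.finrank ℝ (Harm G p) := by

  classical
  -- restriction map
  let f : (Harm G' (fun o => o.elim q p)) →ₗ[ℝ] (Harm G p) :=
    { toFun := fun x => ⟨fun v => x.1 (some v), by
        intro i j hij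
        exact x.2 ((hrestr i j).2 hij)⟩
      map_add' := fun x y => rfl
      map_smul' := fun c x => rfl }
  have hinj : Function.Injective f := by
    intro x y hxy
    have hres : ∀ v : V, x.1 (some v) = y.1 (some v) := fun v =>
      congrFun (congrArg (Subtype.val) hxy) v
    have key : ∀ (z : Option V → EuclideanSpace ℝ (Fin 3)),
        z ∈ Harm G' (fun o => o.elim q p) → (∀ v : V, z (some v) = 0) → z none = 0 := by
      intro z hz hz0
      have horth : ∀ k : Fin 3, ⟪![q - p u₁, q - p u₂, q - p u₃] k, z none⟫ = 0 := by
        have h : ∀ (u : V), G'.Adj none (some u) → ⟪q - p u, z none⟫ = 0 := by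
          intro u hu
          have := hz hu
          simp only [Option.elim, hz0 u, zero_sub, inner_sub_left, inner_neg_right] at this ⊢
          linarith [this]
        intro k
        fin_cases k
        · exact h u₁ h1
        · exact h u₂ h2
        · exact h u₃ h3
      have hspan : Submodule.span ℝ (Set.range ![q - p u₁, q - p u₂, q - p u₃]) = ⊤ := by
        apply LinearIndependent.span_eq_top_of_card_eq_finrank hind
        simp [finrank_euclideanSpace]
      have : z none ∈ (Submodule.span ℝ (Set.range ![q - p u₁, q - p u₂, q - p u₃]))ᗮ := by
        rw [Submodule.mem_orthogonal]
        intro w hw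
        induction hw using Submodule.span_induction with
        | mem w hw =>
            obtain ⟨k, rfl⟩ := hw
            exact horth k
        | zero => simp
        | add a b _ _ ha hb => rw [inner_add_left, ha, hb, add_zero]
        | smul c a _ ha => rw [inner_smul_left, ha, mul_zero]
      rw [hspan, Submodule.top_orthogonal_eq_bot, Submodule.mem_bot] at this
      exact this
    apply Subtype.ext
    funext o
    cases o with
    | some v => exact hres v
    | none =>
        have hmem : (x.1 - y.1) ∈ Harm G' (fun o => o.elim q p) :=
          (Harm G' (fun o => o.elim q p)).sub_mem x.2 y.2
        have := key (x.1 - y.1) hmem (fun v => by simp [hres v])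
        have : x.1 none - y.1 none = 0 := this
        exact sub_eq_zero.mp this
  exact LinearMap.finrank_le_finrank_of_injective hinj
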